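/- For any graph W and any set Σ of implications, W ∈ Mod Σ if and only if every finite induced subgraph of W belongs to Modf Σ. -/

import Mathlib

open Classical

/-- A graph `(V, E)`: an ambient type `U`, a set `verts ⊆ U` of vertices and an
edge relation `Edge ⊆ verts × verts`. -/
structure QGraph : Type 1 where
  U : Type
  verts : Set U
  Edge : U → U → Prop
  edge_mem : ∀ a b, Edge a b → a ∈ verts ∧ b ∈ verts

namespace QGraph

/-- The induced subgraph of `G` on a set `S`. -/
def induce (G : QGraph) (S : Set G.U) : QGraph where
  U := G.U
  verts := G.verts ∩ S
  Edge a b := G.Edge a b ∧ a ∈ S ∧ b ∈ S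
  edge_mem a b h := ⟨⟨(G.edge_mem a b h.1).1, h.2.1⟩, (G.edge_mem a b h.1).2, h.2.2⟩

/-- The set of vertices reachable from `a` by a directed walk (including `a` itself). -/
def reachSet (G : QGraph) (a : G.U) : Set G.U := {b | Relation.ReflTransGen G.Edge a b}

/-- The subgraph of `G` induced by the set of vertices reachable from `a`. -/
def reachSub (G : QGraph) (a : G.U) : QGraph := G.induce (G.reachSet a)

/-- A graph is undirected if its edge relation is symmetric. -/
def Undirected (G : QGraph) : Prop := ∀ a b, G.Edge a b → G.Edge b a

end QGraph

/-- A homomorphism of graphs: maps vertices to vertices and edges to edges. -/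
def IsHom (G H : QGraph) (f : G.U → H.U) : Prop :=
  (∀ a ∈ G.verts, f a ∈ H.verts) ∧ ∀ a b, G.Edge a b → H.Edge (f a) (f b)

/-- A strong homomorphism: additionally maps non-edges to non-edges. -/
def IsStrongHom (G H : QGraph) (f : G.U → H.U) : Prop :=
  IsHom G H f ∧ ∀ a ∈ G.verts, ∀ b ∈ G.verts, ¬ G.Edge a b → ¬ H.Edge (f a) (f b)

/-- Isomorphism of graphs. -/
def IsIsomorphic (G H : QGraph) : Prop :=
  ∃ f : G.U → H.U, Set.BijOn f G.verts H.verts ∧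
    ∀ a ∈ G.verts, ∀ b ∈ G.verts, (G.Edge a b ↔ H.Edge (f a) (f b))

/-- Terms of type (2,0) over a variable set `X`: variables, the constant `∞`,
and a binary operation (juxtaposition). -/
inductive GTerm (X : Type) : Type
  | var : X → GTerm X
  | inf : GTerm X
  | app : GTerm X → GTerm X → GTerm X

namespace GTerm

/-- The set of variables occurring in a term. -/
def vars {X : Type} : GTerm X → Set X
  | var x => {x}
  | inf => ∅
  | app t₁ t₂ => t₁.vars ∪ t₂.vars

/-- A term is nontrivial if it contains no occurrence of `∞`. -/
def Nontrivial {X : Type} : GTerm X → Prop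
  | var _ => True
  | inf => False
  | app t₁ t₂ => t₁.Nontrivial ∧ t₂.Nontrivial

/-- The leftmost variable of a term (`none` for the bare constant `∞` on the left). -/
def leftVar {X : Type} : GTerm X → Option X
  | var x => some x
  | inf => none
  | app t₁ _ => t₁.leftVar

/-- The edge set of the term graph `G(t)`. -/
def edges {X : Type} : GTerm X → Set (X × X)
  | var _ => ∅
  | inf => ∅
  | app t₁ t₂ =>
      t₁.edges ∪ t₂.edges ∪
        {p | ∃ x y, t₁.leftVar = some x ∧ t₂.leftVar = some y ∧ p = (x, y)}

theorem vars_finite {X : Type} (t : GTerm X) : t.vars.Finite := by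
  induction t with
  | var x => simpa [vars] using Set.finite_singleton x
  | inf => simpa [vars] using Set.finite_empty
  | app t₁ t₂ ih₁ ih₂ => simpa [vars] using ih₁.union ih₂

end GTerm

/-- The term graph `G(t)` of a term `t`: vertices are the variables of `t`. -/
def termGraph {X : Type} (t : GTerm X) : QGraph where
  U := X
  verts := t.vars
  Edge a b := (a, b) ∈ t.edges ∧ a ∈ t.vars ∧ b ∈ t.vars
  edge_mem a b h := ⟨h.2.1, h.2.2⟩

/-- Evaluation of a term in the graph algebra `A(G)`; `none` plays the role of `∞`:
`x · y = x` if `(x,y)` is an edge, and `∞` otherwise. -/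
noncomputable def QGraph.eval (G : QGraph) {X : Type} (h : X → Option G.U) :
    GTerm X → Option G.U
  | .var x => h x
  | .inf => none
  | .app t₁ t₂ =>
      match G.eval h t₁, G.eval h t₂ with
      | some a, some b => if G.Edge a b then some a else none
      | _, _ => none

/-- Identities: pairs of terms. -/
abbrev GId (X : Type) := GTerm X × GTerm X

/-- An assignment takes values in `V(G) ∪ {∞}`. -/
def QGraph.Assign (G : QGraph) {X : Type} (h : X → Option G.U) : Prop :=
  ∀ x a, h x = some a → a ∈ G.verts

/-- The assignment `h` makes the identity `e` true in `A(G)`. -/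
def QGraph.SatIdWith (G : QGraph) {X : Type} (h : X → Option G.U) (e : GId X) : Prop :=
  G.eval h e.1 = G.eval h e.2

/-- `G` satisfies the identity `e`. -/
def QGraph.SatId (G : QGraph) {X : Type} (e : GId X) : Prop :=
  ∀ h : X → Option G.U, G.Assign h → G.SatIdWith h e

/-- An implication (quasi-identity) over the standard countably infinite
variable set `ℕ`: a finite set of identities (the premise) and an identity
(the consequence). -/
structure Imp : Type where
  prem : Set (GId ℕ)
  concl : GId ℕ
  prem_fin : prem.Finite

/-- `G` satisfies the implication `imp`. -/
def QGraph.SatImp (G : QGraph) (imp : Imp) : Prop :=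
  ∀ h : ℕ → Option G.U, G.Assign h →
    (∀ e ∈ imp.prem, G.SatIdWith h e) → G.SatIdWith h imp.concl

/-- The implications satisfied by every member of a class `K` of graphs. -/
def qId (K : Set QGraph) : Set Imp := {imp | ∀ G ∈ K, G.SatImp imp}

/-- The class of graphs satisfying every implication of `Sg`. -/
def ModI (Sg : Set Imp) : Set QGraph := {G | ∀ imp ∈ Sg, G.SatImp imp}

/-- The finite members of `ModI Sg`. -/
def ModIf (Sg : Set Imp) : Set QGraph := {G | G ∈ ModI Sg ∧ G.verts.Finite}

/-- The pointed graph `G^⊥`: a new vertex `⊥ = none` with edges from `⊥` to all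
vertices, including a loop at `⊥`. -/
def QGraph.pointed (G : QGraph) : QGraph where
  U := Option G.U
  verts := insert none (some '' G.verts)
  Edge a b := b ∈ insert none (some '' G.verts) ∧
    (a = none ∨ ∃ u v, a = some u ∧ b = some v ∧ G.Edge u v)
  edge_mem a b h := by
    refine ⟨?_, h.1⟩
    rcases h.2 with rfl | ⟨u, v, rfl, rfl, huv⟩
    · exact Set.mem_insert _ _
    · exact Set.mem_insert_of_mem _ ⟨u, (G.edge_mem u v huv).1, rfl⟩

/-- Direct product of a family of graphs (componentwise edges). -/
def gProd {I : Type} (G : I → QGraph) : QGraph where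
  U := (i : I) → (G i).U
  verts := {a | ∀ i, a i ∈ (G i).verts}
  Edge a b := ∀ i, (G i).Edge (a i) (b i)
  edge_mem a b h :=
    ⟨fun i => ((G i).edge_mem _ _ (h i)).1, fun i => ((G i).edge_mem _ _ (h i)).2⟩

/-- The pointed product `∏ i, (G i)^⊥` of a family of graphs. -/
def pointedProd {I : Type} (G : I → QGraph) : QGraph := gProd fun i => (G i).pointed

/-- `W` is a strong pointed subproduct of the family `G`:
(1) `W` is an induced subgraph of the pointed product;
(2) every vertex has nonempty support;
(3) for every vertex `a` and every `k` in the support of `a`, the projection `p k`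
restricted to `reach_W(a)` is a strong homomorphism into `G k`. -/
def IsSPSofFam {I : Type} (G : I → QGraph) (W : QGraph) : Prop :=
  ∃ S : Set (pointedProd G).U,
    W = (pointedProd G).induce S ∧
    (∀ a ∈ ((pointedProd G).induce S).verts, ∃ i, a i ≠ none) ∧
    (∀ a ∈ ((pointedProd G).induce S).verts, ∀ k : I, a k ≠ none →
      (∀ b ∈ (((pointedProd G).induce S).reachSub a).verts, b k ≠ none) ∧
      (∀ b ∈ (((pointedProd G).induce S).reachSub a).verts,
        ∀ u, b k = some u → u ∈ (G k).verts) ∧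
      (∀ b ∈ (((pointedProd G).induce S).reachSub a).verts,
       ∀ c ∈ (((pointedProd G).induce S).reachSub a).verts,
        ∀ u v, b k = some u → c k = some v →
          ((((pointedProd G).induce S).reachSub a).Edge b c ↔ (G k).Edge u v)))

/-- The class of all strong pointed subproducts of families of members of `K`. -/
def Psps (K : Set QGraph) : Set QGraph :=
  {W | ∃ (I : Type) (G : I → QGraph), (∀ i, G i ∈ K) ∧ IsSPSofFam G W}

/-- The finite members of `Psps K`. -/
def PspsFin (K : Set QGraph) : Set QGraph := {W | W ∈ Psps K ∧ W.verts.Finite}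

/-- Isomorphic copies of members of a class of graphs. -/
def Icl (C : Set QGraph) : Set QGraph := {W | ∃ V ∈ C, IsIsomorphic V W}

/-- `W` is the union of a directed family of members of `C` (the members of the
family are induced subgraphs of a common member, pairwise). -/
def IsDirUnionOf (W : QGraph) (C : Set QGraph) : Prop :=
  ∃ (ι : Type) (V : ι → Set W.U) (E : ι → W.U → W.U → Prop)
    (hmem : ∀ i, ∀ a b, E i a b → a ∈ V i ∧ b ∈ V i),
    (∀ i, QGraph.mk W.U (V i) (E i) (hmem i) ∈ C) ∧
    (∀ i j, ∃ k,
      (V i ⊆ V k ∧ ∀ a b, E i a b ↔ E k a b ∧ a ∈ V i ∧ b ∈ V i) ∧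
      (V j ⊆ V k ∧ ∀ a b, E j a b ↔ E k a b ∧ a ∈ V j ∧ b ∈ V j)) ∧
    W.verts = ⋃ i, V i ∧
    ∀ a b, W.Edge a b ↔ ∃ i, E i a b

/-- The class of all directed unions of members of `C`. -/
def DCl (C : Set QGraph) : Set QGraph := {W | IsDirUnionOf W C}

/-- Condition (a) of Proposition `IPK-ab`. -/
def CondA (K : Set QGraph) (W : QGraph) : Prop :=
  ∀ a ∈ W.verts, ∃ Ga ∈ K, ∃ φ : W.U → Ga.U, IsStrongHom (W.reachSub a) Ga φ

/-- Condition (b) of Proposition `IPK-ab`. -/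
def CondB (K : Set QGraph) (W : QGraph) : Prop :=
  ∀ a ∈ W.verts, ∀ a' ∈ W.verts, a ≠ a' → W.reachSet a = W.reachSet a' →
    ∃ Gp ∈ K, ∃ φ : W.U → Gp.U, IsStrongHom (W.reachSub a) Gp φ ∧ φ a ≠ φ a'

/-- The identities `x_a x_b ≈ x_a` for edges `(a,b)` of `G` (variables are the
vertices of `G`). -/
def GammaE (G : QGraph) : Set (GId G.U) :=
  {e | ∃ a b, G.Edge a b ∧ e = (GTerm.app (GTerm.var a) (GTerm.var b), GTerm.var a)}

/-- The identities `x_a x_b ≈ ∞` for non-edges `(a,b)` of `G`. -/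
def GammaN (G : QGraph) : Set (GId G.U) :=
  {e | ∃ a b, a ∈ G.verts ∧ b ∈ G.verts ∧ ¬ G.Edge a b ∧
    e = (GTerm.app (GTerm.var a) (GTerm.var b), GTerm.inf)}

/-- `Σ(G) = Γ_e(G) ∪ Γ_n(G)`. -/
def SigmaIds (G : QGraph) : Set (GId G.U) := GammaE G ∪ GammaN G

theorem SigmaIds_finite (G : QGraph) (hfin : G.verts.Finite) : (SigmaIds G).Finite := by
  classical
  have hsub : SigmaIds G ⊆
      (fun p : G.U × G.U =>
        if G.Edge p.1 p.2 then
          (GTerm.app (GTerm.var p.1) (GTerm.var p.2), GTerm.var p.1)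
        else (GTerm.app (GTerm.var p.1) (GTerm.var p.2), GTerm.inf)) ''
        (G.verts ×ˢ G.verts) := by
    rintro e (⟨a, b, hab, rfl⟩ | ⟨a, b, ha, hb, hnab, rfl⟩)
    · exact ⟨(a, b), Set.mk_mem_prod (G.edge_mem a b hab).1 (G.edge_mem a b hab).2,
        by simp [hab]⟩
    · exact ⟨(a, b), Set.mk_mem_prod ha hb, by simp [hnab]⟩
  exact ((hfin.prod hfin).image _).subset hsub

def GId.vars {X : Type} (e : GId X) : Set X := e.1.vars ∪ e.2.vars

def Imp.vars (imp : Imp) : Set ℕ := imp.concl.vars ∪ ⋃ e ∈ imp.prem, e.vars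

lemma Imp.vars_finite (imp : Imp) : imp.vars.Finite :=
  have hId : ∀ e : GId ℕ, e.vars.Finite := fun e => e.1.vars_finite.union e.2.vars_finite
  (hId _).union (imp.prem_fin.biUnion fun e _ => hId e)

namespace QGraph

variable (G : QGraph) {X : Type}

lemma eval_congr {h h' : X → Option G.U} {t : GTerm X} (hh : ∀ x ∈ t.vars, h x = h' x) :
    G.eval h t = G.eval h' t := by
  induction t with
  | var x => exact hh x rfl
  | inf => rfl
  | app t₁ t₂ ih₁ ih₂ =>
    simp only [eval, ih₁ fun x hx => hh x (Or.inl hx), ih₂ fun x hx => hh x (Or.inr hx)]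

lemma exists_eq_of_eval_eq_some {h : X → Option G.U} {t : GTerm X} {a : G.U}
    (ha : G.eval h t = some a) : ∃ x, h x = some a := by
  induction t with
  | var x => exact ⟨x, ha⟩
  | inf => cases ha
  | app t₁ t₂ ih₁ _ =>
    simp only [eval] at ha
    split at ha
    · split_ifs at ha
      exact ih₁ (by simp_all)
    · cases ha

lemma eval_induce {S : Set G.U} {h : X → Option G.U} (hS : ∀ x a, h x = some a → a ∈ S)
    (t : GTerm X) : (G.induce S).eval h t = G.eval h t := by
  induction t with
  | var x => rfl
  | inf => rfl
  | app t₁ t₂ ih₁ ih₂ =>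
    simp only [eval, ih₁, ih₂]
    rcases ha : G.eval h t₁ with _ | a
    · rfl
    rcases hb : G.eval h t₂ with _ | b
    · rfl
    obtain ⟨x, hx⟩ := G.exists_eq_of_eval_eq_some ha
    obtain ⟨y, hy⟩ := G.exists_eq_of_eval_eq_some hb
    simp [induce, hS x a hx, hS y b hy]

lemma assign_induce_iff {S : Set G.U} {h : X → Option G.U} :
    (G.induce S).Assign h ↔ G.Assign h ∧ ∀ x a, h x = some a → a ∈ S := by
  simp only [Assign, induce]
  exact ⟨fun hA => ⟨fun x a hx => (hA x a hx).1, fun x a hx => (hA x a hx).2⟩,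
    fun hA x a hx => ⟨hA.1 x a hx, hA.2 x a hx⟩⟩

lemma satIdWith_induce_iff {S : Set G.U} {h : X → Option G.U}
    (hS : ∀ x a, h x = some a → a ∈ S) (e : GId X) :
    (G.induce S).SatIdWith h e ↔ G.SatIdWith h e := by
  unfold SatIdWith
  rw [G.eval_induce hS, G.eval_induce hS]
  exact Iff.rfl

lemma satIdWith_congr {h h' : X → Option G.U} {e : GId X}
    (hh : ∀ x ∈ e.vars, h x = h' x) : G.SatIdWith h e ↔ G.SatIdWith h' e := by
  simp only [SatIdWith, G.eval_congr fun x hx => hh x (Or.inl hx),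
    G.eval_congr fun x hx => hh x (Or.inr hx)]

variable {G}

lemma SatImp.induce {imp : Imp} (hG : G.SatImp imp) (S : Set G.U) :
    (G.induce S).SatImp imp := by
  intro h hA hprem
  obtain ⟨hAG, hS⟩ := G.assign_induce_iff.mp hA
  rw [G.satIdWith_induce_iff hS]
  exact hG h hAG fun e he => (G.satIdWith_induce_iff hS e).mp (hprem e he)

/-- An implication only sees the finitely many values of an assignment on its variables;
these span a finite induced subgraph on which the implication can be tested. -/
lemma satImp_of_forall_finite_induce {imp : Imp}
    (hfin : ∀ S : Set G.U, S ⊆ G.verts → S.Finite → (G.induce S).SatImp imp) :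
    G.SatImp imp := by
  intro h hA hprem
  let h' : ℕ → Option G.U := fun x => if x ∈ imp.vars then h x else none
  let S : Set G.U := some ⁻¹' (h '' imp.vars)
  have hS : ∀ x a, h' x = some a → a ∈ S := by
    intro x a hx
    by_cases hxV : x ∈ imp.vars
    · exact ⟨x, hxV, by simpa [h', hxV] using hx⟩
    · simp [h', hxV] at hx
  have hSW : S ⊆ G.verts := by
    rintro a ⟨x, -, hx⟩
    exact hA x a hx
  have hSfin : S.Finite :=
    (imp.vars_finite.image h).preimage (Option.some_injective _).injOn
  have hA' : (G.induce S).Assign h' :=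
    G.assign_induce_iff.mpr ⟨fun x a hx => hSW (hS x a hx), hS⟩
  have hagree : ∀ e : GId ℕ, e.vars ⊆ imp.vars →
      ((G.induce S).SatIdWith h' e ↔ G.SatIdWith h e) := fun e he =>
    (G.satIdWith_induce_iff hS e).trans (G.satIdWith_congr fun x hx => if_pos (he hx))
  refine (hagree _ Set.subset_union_left).mp (hfin S hSW hSfin h' hA' fun e he => ?_)
  exact (hagree e fun x hx => Or.inr (Set.mem_biUnion he hx)).mpr (hprem e he)

end QGraph

/-- `W ∈ Mod Σ` iff every finite induced subgraph of `W`
belongs to `Modf Σ`. -/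
theorem statement_10 (W : QGraph) (Sg : Set Imp) :
    W ∈ ModI Sg ↔
      ∀ S : Set W.U, S ⊆ W.verts → S.Finite → W.induce S ∈ ModIf Sg := by
  constructor
  · intro hW S _ hSfin
    exact ⟨fun imp himp => (hW imp himp).induce S, hSfin.subset Set.inter_subset_right⟩
  · intro hfin imp himp
    exact QGraph.satImp_of_forall_finite_induce fun S hSW hSfin => (hfin S hSW hSfin).1 imp himp
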